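/- arXiv:1708.01334 — 5 statements merged into one kernel-verified Lean document; each statement's English description precedes it below -/
import Mathlib

section
/- Let D(z) = Σ_{l=0}^ν p_l(z) e^{i z q_l} where 0 = q_0 < q_1 < … < q_ν are real numbers, ν ≥ 1, p_0 is a polynomial of degree N ≥ 2 with nonzero leading coefficient, and each p_l for 1 ≤ l ≤ ν is a nonzero polynomial of degree at most N − 2. Then there exist constants c₁ > 0 and c₂ ∈ ℝ such that every zero k of D with Im k ≤ 0 satisfies Im k ≤ −c₁ · log(|Re k| + 1) + c₂. -/
/-!
At a zero `k` with `Im k ≤ 0`, the equation `D(k) = 0` gives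
`|p₀(k)| ≤ ∑_{l ≥ 1} |pₗ(k)| e^{-q_ν Im k}`, since every factor `|e^{i k qₗ}| = e^{-qₗ Im k}` is at
most `e^{-q_ν Im k}`. The degree gap makes `|k|² ∑_{l ≥ 1} |pₗ(k)| = O(|p₀(k)|)` as `|k| → ∞`, so
for large `|k|` we get `|k|² ≤ C e^{-q_ν Im k}`; taking logarithms, `Im k ≤ -(2/q_ν) log |k| + c`.
-/

open Complex Real Polynomial Filter Asymptotics Bornology

namespace Polynomial

theorem isBigO_cobounded_norm_pow_mul_sum {𝕜 ι : Type*} [NormedField 𝕜] (s : Finset ι)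
    {P : 𝕜[X]} (hP : P ≠ 0) (p : ι → 𝕜[X]) (m : ℕ)
    (hdeg : ∀ i ∈ s, (p i).natDegree + m ≤ P.natDegree) :
    (fun z ↦ ‖z‖ ^ m * ∑ i ∈ s, ‖(p i).eval z‖) =O[cobounded 𝕜] P.eval := by
  have hterm : ∀ i ∈ s, (fun z ↦ ‖(X ^ m * p i).eval z‖) =O[cobounded 𝕜] P.eval := by
    refine fun i hi ↦ (isBigO_cobounded_of_degree_le ?_).norm_left
    rw [degree_eq_natDegree hP]
    refine degree_le_of_natDegree_le ((natDegree_mul_le.trans ?_).trans (hdeg i hi))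
    rw [natDegree_X_pow, add_comm]
  simpa only [eval_mul, eval_pow, eval_X, norm_mul, norm_pow, Finset.mul_sum]
    using IsBigO.fun_sum hterm

end Polynomial

theorem Complex.norm_exp_I_mul_mul_ofReal (k : ℂ) (t : ℝ) :
    ‖exp (I * k * t)‖ = Real.exp (-t * k.im) := by
  rw [norm_exp]
  congr 1
  simp [mul_re, mul_comm]

theorem norm_eval_zero_le_of_sum_eq_zero {ν : ℕ} (p : Fin (ν + 1) → ℂ[X]) {q : Fin (ν + 1) → ℝ}
    (hq0 : q 0 = 0) {Q : ℝ} (hQ : ∀ l, q l ≤ Q) {k : ℂ}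
    (hk : ∑ l, (p l).eval k * exp (I * k * q l) = 0) (him : k.im ≤ 0) :
    ‖(p 0).eval k‖ ≤ (∑ i : Fin ν, ‖(p i.succ).eval k‖) * Real.exp (-Q * k.im) := by
  rw [Fin.sum_univ_succ, hq0, ofReal_zero, mul_zero, Complex.exp_zero, mul_one,
    add_eq_zero_iff_eq_neg] at hk
  rw [hk, norm_neg, Finset.sum_mul]
  refine (norm_sum_le _ _).trans (Finset.sum_le_sum fun i _ ↦ ?_)
  rw [norm_mul, norm_exp_I_mul_mul_ofReal]
  exact mul_le_mul_of_nonneg_left (Real.exp_le_exp.mpr (by nlinarith [hQ i.succ])) (norm_nonneg _)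

theorem im_le_of_sq_norm_le_exp {k : ℂ} {C Q : ℝ} (hQ : 0 < Q) (hk : 1 ≤ ‖k‖)
    (h : ‖k‖ ^ 2 ≤ C * Real.exp (-Q * k.im)) :
    k.im ≤ -(2 / Q) * Real.log (|k.re| + 1) + Real.log (4 * C) / Q := by
  have hk0 : 0 < ‖k‖ := one_pos.trans_le hk
  have hC : 0 < C := pos_of_mul_pos_left ((by positivity : (0 : ℝ) < ‖k‖ ^ 2).trans_le h)
    (Real.exp_pos _).le
  have hlog : 2 * Real.log ‖k‖ ≤ Real.log C - Q * k.im := by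
    have := Real.log_le_log (by positivity) h
    rwa [Real.log_pow, Real.log_mul hC.ne' (Real.exp_pos _).ne', Real.log_exp, Nat.cast_ofNat,
      neg_mul, ← sub_eq_add_neg] at this
  have hre : Real.log (|k.re| + 1) ≤ Real.log 2 + Real.log ‖k‖ := by
    rw [← Real.log_mul two_ne_zero hk0.ne']
    exact Real.log_le_log (by positivity) (by linarith [abs_re_le_norm k])
  have h4C : Real.log (4 * C) = 2 * Real.log 2 + Real.log C := by
    rw [Real.log_mul four_ne_zero hC.ne', show (4 : ℝ) = 2 ^ 2 by norm_num, Real.log_pow,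
      Nat.cast_ofNat]
  have key : Q * k.im ≤ Real.log (4 * C) - 2 * Real.log (|k.re| + 1) := by linarith
  rw [neg_mul, div_mul_eq_mul_div, ← sub_eq_neg_add, div_sub_div_same, le_div_iff₀ hQ]
  linarith

theorem exists_im_le_log_of_sq_norm_le_exp {S : Set ℂ} {C Q R : ℝ} (hQ : 0 < Q)
    (hS : ∀ k ∈ S, k.im ≤ 0) (h : ∀ k ∈ S, R ≤ ‖k‖ → ‖k‖ ^ 2 ≤ C * Real.exp (-Q * k.im)) :
    ∃ c₁ > (0 : ℝ), ∃ c₂ : ℝ, ∀ k ∈ S, k.im ≤ -c₁ * Real.log (|k.re| + 1) + c₂ := by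
  set R₁ := max R 1
  refine ⟨2 / Q, by positivity, max (Real.log (4 * C) / Q) (2 / Q * Real.log (R₁ + 1)),
    fun k hk ↦ ?_⟩
  by_cases hkR : R₁ ≤ ‖k‖
  · have := im_le_of_sq_norm_le_exp hQ (le_of_max_le_right hkR) (h k hk (le_of_max_le_left hkR))
    linarith [le_max_left (Real.log (4 * C) / Q) (2 / Q * Real.log (R₁ + 1))]
  · -- on the bounded part the right-hand side is nonnegative
    have hlog : Real.log (|k.re| + 1) ≤ Real.log (R₁ + 1) :=
      Real.log_le_log (by positivity) (by linarith [abs_re_le_norm k])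
    have : 2 / Q * Real.log (|k.re| + 1) ≤ 2 / Q * Real.log (R₁ + 1) := by gcongr
    linarith [hS k hk, le_max_right (Real.log (4 * C) / Q) (2 / Q * Real.log (R₁ + 1))]

theorem stmt1_general (N ν : ℕ) (hN : 2 ≤ N) (hν : 1 ≤ ν)
    (q : Fin (ν + 1) → ℝ) (hq0 : q 0 = 0) (hq : StrictMono q)
    (p : Fin (ν + 1) → Polynomial ℂ)
    (hp0 : (p 0).natDegree = N)
    (hpl : ∀ l : Fin (ν + 1), l ≠ 0 → p l ≠ 0 ∧ (p l).natDegree ≤ N - 2) :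
    ∃ c₁ > (0:ℝ), ∃ c₂ : ℝ, ∀ k : ℂ,
      (∑ l, (p l).eval k * Complex.exp (Complex.I * k * (q l : ℂ))) = 0 →
      k.im ≤ 0 →
      k.im ≤ -c₁ * Real.log (|k.re| + 1) + c₂ := by
  have : NeZero ν := ⟨by omega⟩
  have hQ : 0 < q (Fin.last ν) := hq0 ▸ hq Fin.last_pos'
  have hdeg : 0 < (p 0).degree := natDegree_pos_iff_degree_pos.mp (by omega)
  obtain ⟨C, hC⟩ := (isBigO_cobounded_norm_pow_mul_sum Finset.univ (ne_zero_of_degree_gt hdeg)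
    (fun i : Fin ν ↦ p i.succ) 2 fun i _ ↦ by have := (hpl i.succ i.succ_ne_zero).2; omega).bound
  have hp0_pos := ((p 0).tendsto_norm_atTop hdeg tendsto_norm_cobounded_atTop).eventually_gt_atTop 0
  obtain ⟨R, -, hR⟩ := hasBasis_cobounded_norm.eventually_iff.mp (hC.and hp0_pos)
  set Z : Set ℂ := {k | ∑ l, (p l).eval k * exp (I * k * q l) = 0 ∧ k.im ≤ 0}
  have hsq : ∀ k ∈ Z, R ≤ ‖k‖ → ‖k‖ ^ 2 ≤ C * Real.exp (-q (Fin.last ν) * k.im) := by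
    rintro k ⟨hk, him⟩ hRk
    obtain ⟨hbig, hpos⟩ := hR hRk
    rw [Real.norm_of_nonneg (by positivity)] at hbig
    have hzero := norm_eval_zero_le_of_sum_eq_zero p hq0 (fun l ↦ hq.monotone (Fin.le_last l))
      hk him
    -- with `E = e^{-q_ν Im k}`, cancel `‖p₀(k)‖ > 0` in
    -- `‖k‖² ‖p₀(k)‖ ≤ ‖k‖² (∑ ‖pₗ(k)‖) E ≤ C ‖p₀(k)‖ E`
    refine le_of_mul_le_mul_right ?_ hpos
    nlinarith [Real.exp_pos (-q (Fin.last ν) * k.im), sq_nonneg ‖k‖]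
  obtain ⟨c₁, hc₁, c₂, hc⟩ := exists_im_le_log_of_sq_norm_le_exp hQ (fun k hk ↦ hk.2) hsq
  exact ⟨c₁, hc₁, c₂, fun k hk him ↦ hc k ⟨hk, him⟩⟩

/-- upper logarithmic bound for zeros, lying in the closed lower
half-plane, of the exponential polynomial `D(z) = Σ pₗ(z) e^{i z qₗ}`. -/
theorem stmt1 (N ν : ℕ) (hN : 2 ≤ N) (hν : 1 ≤ ν)
    (q : Fin (ν + 1) → ℝ) (hq0 : q 0 = 0) (hq : StrictMono q)
    (p : Fin (ν + 1) → Polynomial ℂ)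
    (hp0 : (p 0).natDegree = N) (hp0ne : p 0 ≠ 0)
    (hpl : ∀ l : Fin (ν + 1), l ≠ 0 → p l ≠ 0 ∧ (p l).natDegree ≤ N - 2) :
    ∃ c₁ > (0:ℝ), ∃ c₂ : ℝ, ∀ k : ℂ,
      (∑ l, (p l).eval k * Complex.exp (Complex.I * k * (q l : ℂ))) = 0 →
      k.im ≤ 0 →
      k.im ≤ -c₁ * Real.log (|k.re| + 1) + c₂ :=
  stmt1_general N ν hN hν q hq0 hq p hp0 hpl
end

section
/- Let D(z) = Σ_{l=0}^ν p_l(z) e^{i z q_l} where 0 = q_0 < q_1 < … < q_ν, ν ≥ 1, all p_l are nonzero polynomials, deg p_0 = N, and deg p_l ≤ N − 2 for 1 ≤ l ≤ ν. Then there exist constants c₁ ≥ N/(q_ν − q_{ν−1}) and c₂ ∈ ℝ such that D has no zeros in the region { z ∈ ℂ : Im z < −c₁ · log(|Re z| + 1) − c₂ } outside a sufficiently large disk. Consequently every zero k of D with Im k ≤ 0 and |k| large satisfies Im k ≥ −c₁ · log(|Re k| + 1) − c₂. -/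
/-! For large `|z|` with `Im z = -t < 0`, the term with the top frequency `q_ν` has size at
least `m e^{q_ν t}`, `m > 0` bounding `|p_ν|` from below near infinity, while every other term is
`O((1 + |z|)^N e^{(q_ν - δ) t})` with `δ = q_ν - q_{ν-1}`. Since
`1 + |z| ≤ (1 + |Re z|)(1 + t)`, the top term dominates once `(1 + |Re z|)^N < e^{δt/2}`,
i.e. `t > (2N/δ) log(1 + |Re z|)`, and `t` is so large that `e^{δt/2}` absorbs `(1 + t)^N`. -/

open Complex Real
open Filter Asymptotics
open scoped Polynomial

namespace Polynomial

theorem exists_norm_eval_le_mul_one_add_norm_pow {R : Type*} [NormedRing R] [NormOneClass R]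
    (P : R[X]) {n : ℕ} (hn : P.natDegree ≤ n) :
    ∃ C, 0 ≤ C ∧ ∀ z : R, ‖P.eval z‖ ≤ C * (1 + ‖z‖) ^ n := by
  refine ⟨∑ i ∈ Finset.range (n + 1), ‖P.coeff i‖, by positivity, fun z => ?_⟩
  rw [eval_eq_sum_range' (Nat.lt_succ_of_le hn), Finset.sum_mul]
  refine (norm_sum_le _ _).trans (Finset.sum_le_sum fun i hi => ?_)
  calc ‖P.coeff i * z ^ i‖ ≤ ‖P.coeff i‖ * ‖z‖ ^ i :=
        (norm_mul_le _ _).trans (by gcongr; exact norm_pow_le _ _)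
    _ ≤ ‖P.coeff i‖ * (1 + ‖z‖) ^ n := by
      gcongr
      calc ‖z‖ ^ i ≤ (1 + ‖z‖) ^ i := by gcongr; linarith
        _ ≤ (1 + ‖z‖) ^ n :=
          pow_le_pow_right₀ (by simp) (Nat.lt_succ_iff.1 (Finset.mem_range.1 hi))

theorem exists_pos_le_norm_eval_of_ne_zero {R : Type*} [NormedRing R]
    [IsAbsoluteValue (norm : R → ℝ)] {P : R[X]} (hP : P ≠ 0) :
    ∃ m > 0, ∃ r, ∀ z : R, r ≤ ‖z‖ → m ≤ ‖P.eval z‖ := by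
  rcases P.natDegree.eq_zero_or_pos with hdeg | hdeg
  · rw [eq_C_of_natDegree_eq_zero hdeg] at hP ⊢
    exact ⟨_, norm_pos_iff.2 (C_ne_zero.1 hP), 0, fun z _ => by simp⟩
  · have hlim := P.tendsto_norm_atTop (natDegree_pos_iff_degree_pos.1 hdeg)
      (tendsto_comap : Tendsto (‖·‖) (comap (fun z : R => ‖z‖) atTop) atTop)
    obtain ⟨r, hr⟩ := eventually_atTop.1 (eventually_comap.1 (hlim.eventually_ge_atTop 1))
    exact ⟨1, one_pos, r, fun z hz => hr ‖z‖ hz z rfl⟩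

end Polynomial

theorem eventually_mul_one_add_pow_le_exp (K : ℝ) (n : ℕ) {a : ℝ} (ha : 0 < a) :
    ∀ᶠ t in atTop, K * (1 + t) ^ n ≤ Real.exp (a * t) := by
  have hshift :
      (fun t : ℝ => Real.exp (a * (1 + t))) = fun t => Real.exp a * Real.exp (a * t) := by
    ext t; rw [mul_one_add, Real.exp_add]
  have hlittle : (fun t : ℝ => (1 + t) ^ n) =o[atTop] fun t => Real.exp (a * t) := by
    refine ((isLittleO_pow_exp_pos_mul_atTop n ha).comp_tendsto
      (tendsto_atTop_add_const_left _ 1 tendsto_id)).trans_isBigO ?_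
    simpa only [Function.comp_def, id, hshift] using (isBigO_refl _ _).const_mul_left (Real.exp a)
  filter_upwards [(hlittle.const_mul_left K).bound one_pos] with t ht
  simpa [abs_of_pos (Real.exp_pos _)] using (le_abs_self _).trans ht

theorem exists_mul_pow_lt_exp_above_log_curve (K : ℝ) {δ : ℝ} (hδ : 0 < δ) (M : ℕ) :
    ∃ T ≥ 0, ∀ x t : ℝ, 0 ≤ x → 2 * M / δ * Real.log (x + 1) + T < t →
      K * ((1 + x) * (1 + t)) ^ M < Real.exp (δ * t) := by
  obtain ⟨T, hT⟩ := eventually_atTop.1 (eventually_mul_one_add_pow_le_exp K M (half_pos hδ))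
  refine ⟨max T 0, le_max_right _ _, fun x t hx ht => ?_⟩
  have hlog : 0 ≤ 2 * M / δ * Real.log (x + 1) := by
    have := Real.log_nonneg (by linarith : (1 : ℝ) ≤ x + 1); positivity
  have hpoly : K * (1 + t) ^ M ≤ Real.exp (δ / 2 * t) :=
    hT t ((le_max_left _ _).trans (by linarith))
  have hlog_lt : M * Real.log (1 + x) < δ / 2 * t := by
    have := mul_lt_mul_of_pos_left (by linarith [le_max_right T 0] :
      2 * M / δ * Real.log (x + 1) < t) (half_pos hδ)
    rwa [← mul_assoc, show δ / 2 * (2 * M / δ) = M by field_simp, add_comm x] at this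
  have hexp : (1 + x) ^ M < Real.exp (δ / 2 * t) := by
    rw [← Real.exp_log (by linarith : (0 : ℝ) < 1 + x), ← Real.exp_nat_mul]
    exact Real.exp_lt_exp.2 hlog_lt
  calc K * ((1 + x) * (1 + t)) ^ M = K * (1 + t) ^ M * (1 + x) ^ M := by rw [mul_pow]; ring
    _ ≤ Real.exp (δ / 2 * t) * (1 + x) ^ M := by gcongr
    _ < Real.exp (δ / 2 * t) * Real.exp (δ / 2 * t) := by gcongr
    _ = Real.exp (δ * t) := by rw [← Real.exp_add]; ring_nf

theorem Finset.sum_ne_zero_of_sum_erase_norm_lt {ι E : Type*} [NormedAddCommGroup E]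
    [DecidableEq ι] {s : Finset ι} {f : ι → E} {i : ι} (hi : i ∈ s)
    (h : ∑ j ∈ s.erase i, ‖f j‖ < ‖f i‖) :
    ∑ j ∈ s, f j ≠ 0 := by
  rw [← Finset.add_sum_erase s f hi]
  intro h0
  rw [eq_neg_of_add_eq_zero_left h0, norm_neg] at h
  exact (norm_sum_le _ _).not_gt h

theorem Complex.norm_exp_I_mul_mul_ofReal_s2 (z : ℂ) (s : ℝ) :
    ‖Complex.exp (I * z * s)‖ = Real.exp (s * -z.im) := by
  simp [Complex.norm_exp]; ring_nf

section ExpPoly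

variable {ι : Type*} [Fintype ι] (p : ι → ℂ[X]) (q : ι → ℝ)

noncomputable def expPoly (z : ℂ) : ℂ := ∑ l, (p l).eval z * Complex.exp (I * z * q l)

variable {p q}

theorem expPoly_ne_zero_of_dominant [DecidableEq ι] {L : ι} {δ B m : ℝ}
    (hgap : ∀ l ≠ L, q l + δ ≤ q L) {z : ℂ} (him : z.im ≤ 0) (hB0 : 0 ≤ B)
    (hB : ∀ l ≠ L, ‖(p l).eval z‖ ≤ B) (hm : m ≤ ‖(p L).eval z‖)
    (hlt : Fintype.card ι * B < m * Real.exp (δ * -z.im)) :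
    expPoly p q z ≠ 0 := by
  set t := -z.im
  have ht : 0 ≤ t := neg_nonneg.2 him
  have hnorm : ∀ l, ‖(p l).eval z * Complex.exp (I * z * q l)‖ =
      ‖(p l).eval z‖ * Real.exp (q l * t) := fun l => by
    rw [norm_mul, Complex.norm_exp_I_mul_mul_ofReal_s2]
  refine Finset.sum_ne_zero_of_sum_erase_norm_lt (Finset.mem_univ L) ?_
  calc ∑ l ∈ Finset.univ.erase L, ‖(p l).eval z * Complex.exp (I * z * q l)‖
      ≤ ∑ l ∈ Finset.univ.erase L, B * Real.exp ((q L - δ) * t) := by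
        refine Finset.sum_le_sum fun l hl => ?_
        have hl := Finset.ne_of_mem_erase hl
        rw [hnorm]
        gcongr
        · exact hB l hl
        · linarith [hgap l hl]
    _ ≤ ∑ l, B * Real.exp ((q L - δ) * t) :=
        Finset.sum_le_sum_of_subset_of_nonneg (Finset.erase_subset _ _)
          fun _ _ _ => mul_nonneg hB0 (Real.exp_pos _).le
    _ = Fintype.card ι * B * Real.exp ((q L - δ) * t) := by simp [mul_assoc]
    _ < m * Real.exp (δ * t) * Real.exp ((q L - δ) * t) := by gcongr
    _ = m * Real.exp (q L * t) := by rw [mul_assoc, ← Real.exp_add]; ring_nf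
    _ ≤ ‖(p L).eval z * Complex.exp (I * z * q L)‖ := by rw [hnorm]; gcongr

theorem exists_expPoly_ne_zero_below_log_curve [DecidableEq ι] {L : ι} (hL : p L ≠ 0)
    {δ : ℝ} (hδ : 0 < δ) (hgap : ∀ l ≠ L, q l + δ ≤ q L) {M : ℕ}
    (hdeg : ∀ l, (p l).natDegree ≤ M) :
    ∃ c₂, ∃ r > 0, ∀ z : ℂ, r ≤ ‖z‖ →
      z.im < -(2 * M / δ) * Real.log (|z.re| + 1) - c₂ → expPoly p q z ≠ 0 := by
  choose C hC0 hC using fun l => (p l).exists_norm_eval_le_mul_one_add_norm_pow (hdeg l)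
  obtain ⟨m, hm, R, hR⟩ := Polynomial.exists_pos_le_norm_eval_of_ne_zero hL
  have hCsum : 0 ≤ ∑ l, C l := Finset.sum_nonneg fun l _ => hC0 l
  set K := Fintype.card ι * (∑ l, C l) / m
  obtain ⟨T, hT0, hT⟩ := exists_mul_pow_lt_exp_above_log_curve K hδ M
  refine ⟨T, max R 1, by positivity, fun z hz hbelow => ?_⟩
  have hlog : 0 ≤ 2 * M / δ * Real.log (|z.re| + 1) := by
    have := Real.log_nonneg (by linarith [abs_nonneg z.re] : (1 : ℝ) ≤ |z.re| + 1); positivity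
  have him : z.im < 0 := by linarith
  have hz_le : 1 + ‖z‖ ≤ (1 + |z.re|) * (1 + -z.im) := by
    have := Complex.norm_le_abs_re_add_abs_im z
    rw [abs_of_neg him] at this
    nlinarith [abs_nonneg z.re]
  refine expPoly_ne_zero_of_dominant (B := (∑ l, C l) * (1 + ‖z‖) ^ M) hgap him.le
    (by positivity)
    (fun l _ => (hC l z).trans <| by
      gcongr; exact Finset.single_le_sum (fun i _ => hC0 i) (Finset.mem_univ l))
    (hR z ((le_max_left _ _).trans hz)) ?_
  calc Fintype.card ι * ((∑ l, C l) * (1 + ‖z‖) ^ M)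
      ≤ Fintype.card ι * ((∑ l, C l) * ((1 + |z.re|) * (1 + -z.im)) ^ M) := by gcongr
    _ = m * (K * ((1 + |z.re|) * (1 + -z.im)) ^ M) := by simp only [K]; field_simp
    _ < m * Real.exp (δ * -z.im) := by gcongr; exact hT _ _ (abs_nonneg _) (by linarith)

end ExpPoly

/-- lower logarithmic bound on the imaginary parts of zeros of the
exponential polynomial `D(z) = Σ pₗ(z) e^{i z qₗ}`: outside a large disk, `D`
has no zeros below the curve `Im z = -c₁ log(|Re z|+1) - c₂`, with
`c₁ ≥ N/(q_ν − q_{ν−1})`. -/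
theorem stmt2 (N ν : ℕ) (hν : 1 ≤ ν)
    (q : Fin (ν + 1) → ℝ) (hq : StrictMono q)
    (p : Fin (ν + 1) → Polynomial ℂ)
    (hpne : ∀ l, p l ≠ 0)
    (hp0 : (p 0).natDegree = N)
    (hpl : ∀ l : Fin (ν + 1), l ≠ 0 → (p l).natDegree ≤ N - 2) :
    ∃ c₁ : ℝ, (N : ℝ) / (q (Fin.last ν) - q ⟨ν - 1, by omega⟩) ≤ c₁ ∧
    ∃ c₂ : ℝ, ∃ r > (0:ℝ),
      (∀ z : ℂ, r ≤ ‖z‖ →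
        z.im < -c₁ * Real.log (|z.re| + 1) - c₂ →
        (∑ l, (p l).eval z * Complex.exp (Complex.I * z * (q l : ℂ))) ≠ 0) ∧
      (∀ k : ℂ, r ≤ ‖k‖ →
        (∑ l, (p l).eval k * Complex.exp (Complex.I * k * (q l : ℂ))) = 0 →
        k.im ≤ 0 →
        -c₁ * Real.log (|k.re| + 1) - c₂ ≤ k.im) := by
  set J : Fin (ν + 1) := ⟨ν - 1, by omega⟩
  set L := Fin.last ν
  have hδ : 0 < q L - q J := sub_pos.2 (hq (Fin.lt_def.2 (by simp [J, L]; omega)))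
  have hgap : ∀ l ≠ L, q l + (q L - q J) ≤ q L := fun l hl => by
    have hlJ : l ≤ J := Fin.le_def.2 (by have := Fin.val_lt_last hl; simp [J]; omega)
    linarith [hq.monotone hlJ]
  have hdeg : ∀ l, (p l).natDegree ≤ N := fun l => by
    rcases eq_or_ne l 0 with rfl | hl
    · exact hp0.le
    · exact (hpl l hl).trans (Nat.sub_le N 2)
  obtain ⟨c₂, r, hr, hfree⟩ := exists_expPoly_ne_zero_below_log_curve (hpne _) hδ hgap hdeg
  refine ⟨2 * N / (q L - q J), by gcongr; linarith [N.cast_nonneg (α := ℝ)],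
    c₂, r, hr, hfree, fun k hk hk0 _ => le_of_not_gt fun h => hfree k hk h hk0⟩
end

section
/- Let α ∈ (ℂ₋ ∪ ℝ)^N (each Im α_j ≤ 0), let Y ⊂ ℝ³ consist of N distinct points, and let z = i t with t > 0. Then the matrix i·Γ_{α,Y}(it) is accretive: for every vector u ∈ ℂ^N, Re ⟨ i Γ_{α,Y}(it) u, u ⟩ ≥ 0, where ⟨·,·⟩ is the standard inner product on ℂ^N. -/
open Complex Real
open scoped Classical

/-- The regularized free Green function `G̃_z(x) = e^{iz|x|}/(4π|x|)` for `x ≠ 0`,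
`G̃_z(0) = 0`. -/
noncomputable def Gt (z : ℂ) (x : EuclideanSpace ℝ (Fin 3)) : ℂ :=
  if x = 0 then 0 else Complex.exp (Complex.I * z * ‖x‖) / (4 * Real.pi * ‖x‖)

/-- The matrix `Γ_{α,Y}(z)` with entries
`(α_j − i z/(4π)) δ_{jj'} − G̃_z(y_j − y_{j'})`. -/
noncomputable def GammaM (N : ℕ) (y : Fin N → EuclideanSpace ℝ (Fin 3))
    (α : Fin N → ℂ) (z : ℂ) : Matrix (Fin N) (Fin N) ℂ :=
  Matrix.of fun j j' =>
    (if j = j' then α j - Complex.I * z / (4 * Real.pi) else 0) - Gt z (y j - y j')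

/-! At `z = it` the regularized Green function is the real, even Yukawa kernel
`e^{-t|x|}/(4π|x|)`, so its matrix `(G̃_{it}(y_j − y_k))` is Hermitian and contributes nothing to
`Im ⟨u, Γ u⟩`; the diagonal shift `−i(it)/(4π) = t/(4π)` is real as well. Hence
`Re ⟨iΓu, u⟩ = −Im ⟨u, Γu⟩ = −∑ Im α_j |u_j|² ≥ 0`. -/

namespace Matrix

variable {n : Type*} [Fintype n]

theorem re_star_I_smul_mulVec_dotProduct (A : Matrix n n ℂ) (u : n → ℂ) :
    (star (Complex.I • A *ᵥ u) ⬝ᵥ u).re = -(star u ⬝ᵥ A *ᵥ u).im := by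
  rw [star_smul, smul_dotProduct, star_dotProduct]
  simp

theorem im_star_dotProduct_diagonal_mulVec [DecidableEq n] (d u : n → ℂ) :
    (star u ⬝ᵥ diagonal d *ᵥ u).im = ∑ j, (d j).im * Complex.normSq (u j) := by
  simp only [dotProduct, mulVec_diagonal, Complex.im_sum]
  refine Finset.sum_congr rfl fun j _ => ?_
  simp [Complex.mul_im, Complex.normSq_apply]
  ring

end Matrix

section

open Matrix

theorem Gt_neg (z : ℂ) (x : EuclideanSpace ℝ (Fin 3)) : Gt z (-x) = Gt z x := by
  simp [Gt]

theorem Gt_I_mul_ofReal (t : ℝ) (x : EuclideanSpace ℝ (Fin 3)) :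
    Gt (Complex.I * t) x =
      ((if x = 0 then 0 else Real.exp (-t * ‖x‖) / (4 * Real.pi * ‖x‖) : ℝ) : ℂ) := by
  unfold Gt
  split_ifs
  · simp
  · have : Complex.I * (Complex.I * t) * ‖x‖ = ((-t * ‖x‖ : ℝ) : ℂ) := by
      push_cast; ring_nf; simp
    rw [this, ← Complex.ofReal_exp]
    push_cast
    ring

theorem isHermitian_Gt_I_mul_ofReal {N : ℕ} (y : Fin N → EuclideanSpace ℝ (Fin 3)) (t : ℝ) :
    (of fun j k => Gt (Complex.I * t) (y j - y k)).IsHermitian := by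
  ext j k
  simp only [conjTranspose_apply, of_apply, Gt_I_mul_ofReal, RCLike.star_def,
    Complex.conj_ofReal]
  rw [← neg_sub, ← Gt_I_mul_ofReal, Gt_neg, Gt_I_mul_ofReal]

theorem GammaM_eq_diagonal_sub (N : ℕ) (y : Fin N → EuclideanSpace ℝ (Fin 3))
    (α : Fin N → ℂ) (z : ℂ) :
    GammaM N y α z = diagonal (fun j => α j - Complex.I * z / (4 * Real.pi)) -
      of fun j k => Gt z (y j - y k) := by
  ext j k
  simp [GammaM, diagonal_apply]

theorem im_star_dotProduct_GammaM_I_mul_ofReal (N : ℕ)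
    (y : Fin N → EuclideanSpace ℝ (Fin 3)) (α : Fin N → ℂ) (t : ℝ) (u : Fin N → ℂ) :
    (star u ⬝ᵥ GammaM N y α (Complex.I * t) *ᵥ u).im = ∑ j, (α j).im * Complex.normSq (u j) := by
  have hG := (isHermitian_Gt_I_mul_ofReal y t).im_star_dotProduct_mulVec_self u
  rw [RCLike.im_to_complex] at hG
  rw [GammaM_eq_diagonal_sub, sub_mulVec, dotProduct_sub, Complex.sub_im, hG, sub_zero,
    im_star_dotProduct_diagonal_mulVec]
  refine Finset.sum_congr rfl fun j _ => congrArg (· * _) ?_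
  rw [← mul_assoc, Complex.I_mul_I]
  simpa using Complex.ofReal_im (-t / (4 * Real.pi))

end

theorem stmt5_general (N : ℕ) (y : Fin N → EuclideanSpace ℝ (Fin 3))
    (α : Fin N → ℂ)
    (hα : ∀ j, (α j).im ≤ 0) (t : ℝ) (u : Fin N → ℂ) :
    0 ≤ (∑ j, (starRingEnd ℂ)
        ((Complex.I • (GammaM N y α (Complex.I * t)).mulVec u) j) * u j).re := by
  change 0 ≤ (dotProduct (star (Complex.I • (GammaM N y α (Complex.I * t)).mulVec u)) u).re
  rw [Matrix.re_star_I_smul_mulVec_dotProduct, im_star_dotProduct_GammaM_I_mul_ofReal,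
    ← Finset.sum_neg_distrib]
  exact Finset.sum_nonneg fun j _ => by
    rw [← neg_mul]
    exact mul_nonneg (neg_nonneg.mpr (hα j)) (Complex.normSq_nonneg _)

/-- for dissipative strength parameters (`Im αⱼ ≤ 0`) and `z = it`
with `t > 0`, the matrix `i Γ_{α,Y}(it)` is accretive:
`Re ⟨ i Γ_{α,Y}(it) u, u ⟩ ≥ 0` for all `u ∈ ℂ^N`. -/
theorem stmt5 (N : ℕ) (y : Fin N → EuclideanSpace ℝ (Fin 3))
    (hy : Function.Injective y) (α : Fin N → ℂ)
    (hα : ∀ j, (α j).im ≤ 0) (t : ℝ) (ht : 0 < t) (u : Fin N → ℂ) :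
    0 ≤ (∑ j, (starRingEnd ℂ)
        ((Complex.I • (GammaM N y α (Complex.I * t)).mulVec u) j) * u j).re :=
  stmt5_general N y α hα t u
end

section
/- Let N ≥ 2 and fix distinct points y_1,…,y_N ∈ ℝ³ with diameter diam(Y) = max_{j,j'} |y_j − y_{j'}|. Then there exists a constant c₁ > 0 depending only on Y such that for every α ∈ ℂ^N with Im α_j ≤ 0 for all j, every zero k of det Γ_{α,Y} with Re k > 0 and Im k ≤ 0 satisfies −Im k ≥ (2/(N·diam(Y)))·log(|Re k| + 1) − c₁. That is, the upper logarithmic bound on resonances is uniform in the dissipative strength parameters α. -/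
open Complex Real
open scoped Classical

/-!
By Gershgorin, a zero `k` of `det Γ_{α,Y}` has a row `j` with
`‖α_j − i k/(4π)‖ ≤ ∑_{j' ≠ j} |G̃_k(y_j − y_{j'})|`.
Since `Im α_j ≤ 0`, the left side is at least `Re k/(4π)` whatever `α` is, while each term
on the right is at most `e^{−Im k · diam Y}/(4π d)`, `d` the minimal distance in `Y`.
Hence `Re k ≤ (N/d) e^{−Im k · diam Y}`, and taking logarithms gives the bound.
-/

theorem Matrix.exists_norm_diag_le_sum_of_det_eq_zero {K n : Type*} [NormedField K] [Fintype n]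
    [DecidableEq n] {A : Matrix n n K} (h : A.det = 0) :
    ∃ k, ‖A k k‖ ≤ ∑ j ∈ Finset.univ.erase k, ‖A k j‖ := by
  by_contra! hlt
  exact det_ne_zero_of_sum_row_lt_diag hlt h

theorem exists_pos_le_dist_of_injective {ι X : Type*} [Finite ι] [MetricSpace X] {y : ι → X}
    (hy : Function.Injective y) : ∃ d > 0, ∀ i j, i ≠ j → d ≤ dist (y i) (y j) := by
  have hev : ∀ᶠ d in nhdsWithin (0 : ℝ) (Set.Ioi 0), ∀ i j, i ≠ j → d ≤ dist (y i) (y j) := by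
    simp only [Filter.eventually_all]
    intro i j hij
    exact nhdsWithin_le_nhds (eventually_le_nhds (dist_pos.mpr (hy.ne hij)))
  obtain ⟨d, hd, hd_pos⟩ := (hev.and self_mem_nhdsWithin).exists
  exact ⟨d, hd_pos, hd⟩

theorem norm_Gt {z : ℂ} {x : EuclideanSpace ℝ (Fin 3)} (hx : x ≠ 0) :
    ‖Gt z x‖ = Real.exp (-z.im * ‖x‖) / (4 * π * ‖x‖) := by
  have hpos : 0 < 4 * π * ‖x‖ := by positivity
  rw [Gt, if_neg hx, norm_div, Complex.norm_exp]
  congr 1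
  · simp
  · exact_mod_cast (Complex.norm_real _).trans (abs_of_pos hpos)

theorem norm_Gt_le {z : ℂ} {x : EuclideanSpace ℝ (Fin 3)} {d L : ℝ} (hz : z.im ≤ 0)
    (hd : 0 < d) (hdx : d ≤ ‖x‖) (hxL : ‖x‖ ≤ L) :
    ‖Gt z x‖ ≤ Real.exp (-z.im * L) / (4 * π * d) := by
  rw [norm_Gt (norm_pos_iff.mp (hd.trans_le hdx))]
  gcongr
  linarith

theorem GammaM_apply_self (N : ℕ) (y : Fin N → EuclideanSpace ℝ (Fin 3)) (α : Fin N → ℂ)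
    (z : ℂ) (j : Fin N) : GammaM N y α z j j = α j - I * z / (4 * π) := by
  simp [GammaM, Gt]

theorem GammaM_apply_of_ne (N : ℕ) (y : Fin N → EuclideanSpace ℝ (Fin 3)) (α : Fin N → ℂ)
    (z : ℂ) {j j' : Fin N} (h : j ≠ j') : GammaM N y α z j j' = -Gt z (y j - y j') := by
  simp [GammaM, h]

theorem re_div_le_norm_sub_I_mul_div {a z : ℂ} (ha : a.im ≤ 0) :
    z.re / (4 * π) ≤ ‖a - I * z / (4 * π)‖ := by
  have him : (a - I * z / (4 * π)).im = a.im - z.re / (4 * π) := by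
    simp [Complex.div_im, Complex.normSq_apply]
    field_simp
  calc z.re / (4 * π) ≤ -(a - I * z / (4 * π)).im := by rw [him]; linarith
    _ ≤ ‖a - I * z / (4 * π)‖ := (neg_le_abs _).trans (Complex.abs_im_le_norm _)

theorem re_le_of_det_GammaM_eq_zero {N : ℕ} {y : Fin N → EuclideanSpace ℝ (Fin 3)}
    {α : Fin N → ℂ} {k : ℂ} {d L : ℝ} (hd : 0 < d)
    (hd_le : ∀ j j', j ≠ j' → d ≤ dist (y j) (y j')) (hL : ∀ j j', dist (y j) (y j') ≤ L)
    (hα : ∀ j, (α j).im ≤ 0) (hk : k.im ≤ 0) (hdet : (GammaM N y α k).det = 0) :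
    k.re ≤ N / d * Real.exp (-k.im * L) := by
  set B := Real.exp (-k.im * L) / (4 * π * d)
  obtain ⟨j, hj⟩ := Matrix.exists_norm_diag_le_sum_of_det_eq_zero hdet
  have hterm : ∀ j' ∈ Finset.univ.erase j, ‖GammaM N y α k j j'‖ ≤ B := by
    intro j' hj'
    have hne := (Finset.ne_of_mem_erase hj').symm
    rw [GammaM_apply_of_ne N y α k hne, norm_neg]
    exact norm_Gt_le hk hd (dist_eq_norm (y j) (y j') ▸ hd_le j j' hne)
      (dist_eq_norm (y j) (y j') ▸ hL j j')
  have hcard : ((Finset.univ.erase j).card : ℝ) ≤ N := by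
    exact_mod_cast (Finset.card_le_univ _).trans_eq (Fintype.card_fin N)
  have hre : k.re / (4 * π) ≤ N * B :=
    calc k.re / (4 * π) ≤ ‖GammaM N y α k j j‖ :=
          GammaM_apply_self N y α k j ▸ re_div_le_norm_sub_I_mul_div (hα j)
      _ ≤ ∑ j' ∈ Finset.univ.erase j, ‖GammaM N y α k j j'‖ := hj
      _ ≤ (Finset.univ.erase j).card * B := by
          simpa using Finset.sum_le_card_nsmul _ _ _ hterm
      _ ≤ N * B := by gcongr
  calc k.re = k.re / (4 * π) * (4 * π) := by field_simp
    _ ≤ N * B * (4 * π) := by gcongr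
    _ = N / d * Real.exp (-k.im * L) := by simp only [B]; field_simp

theorem log_add_one_le_of_le_mul_exp {x C s : ℝ} (hx : 0 ≤ x) (hC : 0 ≤ C) (hs : 0 ≤ s)
    (h : x ≤ C * Real.exp s) : Real.log (x + 1) ≤ Real.log (C + 1) + s := by
  have hle : x + 1 ≤ (C + 1) * Real.exp s := by nlinarith [Real.one_le_exp hs]
  calc Real.log (x + 1) ≤ Real.log ((C + 1) * Real.exp s) := Real.log_le_log (by linarith) hle
    _ = Real.log (C + 1) + s := by rw [Real.log_mul (by positivity) (by positivity), Real.log_exp]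

/-- uniform (in the dissipative strength parameters `α`) upper
logarithmic bound on resonances: `−Im k ≥ (2/(N·diam Y))·log(|Re k|+1) − c₁`
for every zero `k` of `det Γ_{α,Y}` with `Re k > 0`, `Im k ≤ 0`. -/
theorem stmt7 (N : ℕ) (hN : 2 ≤ N) (y : Fin N → EuclideanSpace ℝ (Fin 3))
    (hy : Function.Injective y) (L : ℝ)
    (hL : IsGreatest {d : ℝ | ∃ j j' : Fin N, d = dist (y j) (y j')} L) :
    ∃ c₁ > (0:ℝ), ∀ α : Fin N → ℂ, (∀ j, (α j).im ≤ 0) → ∀ k : ℂ,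
      (GammaM N y α k).det = 0 → 0 < k.re → k.im ≤ 0 →
      2 / (N * L) * Real.log (|k.re| + 1) - c₁ ≤ -k.im := by
  obtain ⟨d, hd, hd_le⟩ := exists_pos_le_dist_of_injective hy
  have hL_dist : ∀ j j', dist (y j) (y j') ≤ L := fun j j' => hL.2 ⟨j, j', rfl⟩
  have hL_pos : 0 < L := hd.trans_le <|
    (hd_le ⟨0, by omega⟩ ⟨1, by omega⟩ (by simp [Fin.ext_iff])).trans (hL_dist _ _)
  have hN_pos : (0 : ℝ) < N := by positivity
  refine ⟨Real.log (N / d + 1) / L, div_pos (Real.log_pos (by simp [hN_pos, hd])) hL_pos,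
    fun α hα k hdet hre hk => ?_⟩
  have hlog := log_add_one_le_of_le_mul_exp hre.le (by positivity)
    (mul_nonneg (neg_nonneg.mpr hk) hL_pos.le)
    (re_le_of_det_GammaM_eq_zero hd hd_le hL_dist hα hk hdet)
  have hcoef : 2 / (N * L) ≤ 1 / L := by
    rw [div_le_div_iff₀ (by positivity) hL_pos]
    have h2N : (2 : ℝ) ≤ N := by exact_mod_cast hN
    nlinarith
  rw [abs_of_pos hre]
  calc 2 / (N * L) * Real.log (k.re + 1) - Real.log (N / d + 1) / L
      ≤ 1 / L * Real.log (k.re + 1) - Real.log (N / d + 1) / L := by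
        gcongr
        exact Real.log_nonneg (by linarith)
    _ ≤ -k.im := by
        rw [one_div_mul_eq_div, ← sub_div, div_le_iff₀ hL_pos]
        linarith
end

section
/- Let w₁,…,w_N ∈ ℂ and suppose that the set { c·w_j : c ∈ ℂ, Im c ≤ 0, 1 ≤ j ≤ N } is contained in a single closed half-plane e^{iξ}(ℂ₊ ∪ ℝ) for some ξ ∈ [−π, π). Then there exists ξ' ∈ [−π, π) such that every w_j lies on the ray e^{iξ'}·[0, ∞). -/
open Complex Real

/-- if all products `c·wⱼ` with `Im c ≤ 0` lie in one closed
half-plane `e^{iξ}(ℂ₊ ∪ ℝ)`, then all `wⱼ` lie on a common ray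
`e^{iξ'}·[0,∞)`. -/
theorem stmt18 (N : ℕ) (w : Fin N → ℂ) (ξ : ℝ)
    (hξ : ξ ∈ Set.Ico (-Real.pi) Real.pi)
    (h : ∀ c : ℂ, c.im ≤ 0 → ∀ j, c * w j ∈
      (fun s => Complex.exp (Complex.I * ξ) * s) '' {s : ℂ | 0 ≤ s.im}) :
    ∃ ξ' ∈ Set.Ico (-Real.pi) Real.pi, ∀ j, ∃ t : ℝ,
      0 ≤ t ∧ w j = Complex.exp (Complex.I * ξ') * t := by
  obtain ⟨hξ1, hξ2⟩ := hξ
  have hpi := Real.pi_pos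
  set ξ' : ℝ := if ξ < 0 then ξ + Real.pi else ξ - Real.pi with hξ'def
  have hmem : ξ' ∈ Set.Ico (-Real.pi) Real.pi := by
    rw [hξ'def]
    split_ifs with hc <;> constructor <;> linarith
  have hexp : Complex.exp (Complex.I * ξ') = -Complex.exp (Complex.I * ξ) := by
    rw [hξ'def]
    split_ifs with hc
    · push_cast
      rw [mul_add, Complex.exp_add, mul_comm Complex.I (Real.pi : ℂ),
        Complex.exp_pi_mul_I]
      ring
    · push_cast
      rw [mul_sub, Complex.exp_sub, mul_comm Complex.I (Real.pi : ℂ),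
        Complex.exp_pi_mul_I]
      field_simp
  refine ⟨ξ', hmem, fun j => ?_⟩
  have hne : Complex.exp (Complex.I * ξ) ≠ 0 := Complex.exp_ne_zero _
  obtain ⟨s, hs, hes⟩ := h 1 (by norm_num) j
  obtain ⟨s1, hs1, hes1⟩ := h (-1) (by norm_num) j
  obtain ⟨s2, hs2, hes2⟩ := h (-Complex.I) (by simp) j
  simp only [Set.mem_setOf_eq] at hs hs1 hs2
  dsimp only at hes hes1 hes2
  rw [one_mul] at hes
  have e1 : s1 = -s := by
    apply mul_left_cancel₀ hne
    rw [hes1, ← hes]; ring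
  have e2 : s2 = -Complex.I * s := by
    apply mul_left_cancel₀ hne
    rw [hes2, ← hes]; ring
  have him : s.im = 0 := by
    have : 0 ≤ -s.im := by simpa [e1] using hs1
    linarith
  have hre : s.re ≤ 0 := by
    have : 0 ≤ (-Complex.I * s).im := by rw [← e2]; exact hs2
    simp [Complex.mul_im, him] at this
    linarith
  refine ⟨-s.re, by linarith, ?_⟩
  rw [hexp, ← hes]
  have : s = (s.re : ℂ) := Complex.ext rfl (by simp [him])
  rw [this]
  simp
end
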